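/- The function y ↦ h(y)² − 1/y², with h(y) = 6(e^{2y}+1)e^{2y}/((e^{4y}+4e^{2y}+1)(e^{2y}-1)), extends to an integrable function on (0,1): ∫₀¹ |h(y)² − 1/y²| dy < ∞. -/
import Mathlib

noncomputable def kwH (y : ℝ) : ℝ :=
  6 * (Real.exp (2 * y) + 1) * Real.exp (2 * y) /
    ((Real.exp (4 * y) + 4 * Real.exp (2 * y) + 1) * (Real.exp (2 * y) - 1))

open Real

-- Taylor bound for exp with n = 4
lemma kw_exp_taylor {t : ℝ} (h0 : 0 ≤ t) (h1 : t ≤ 1) :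
    |Real.exp t - (1 + t + t ^ 2 / 2 + t ^ 3 / 6)| ≤ 5 / 96 * t ^ 4 := by
  have h := Real.exp_bound (x := t) (by rw [abs_of_nonneg h0]; exact h1) (n := 4) (by norm_num)
  have hs : ∑ m ∈ Finset.range 4, t ^ m / m.factorial = 1 + t + t ^ 2 / 2 + t ^ 3 / 6 := by
    norm_num [Finset.sum_range_succ, Nat.factorial]
  rw [hs, abs_of_nonneg h0] at h
  calc |Real.exp t - (1 + t + t ^ 2 / 2 + t ^ 3 / 6)| ≤ t ^ 4 * ((4:ℕ).succ / ((4:ℕ).factorial * 4)) := h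
    _ = 5 / 96 * t ^ 4 := by norm_num [Nat.factorial]; ring

noncomputable def kwM : ℝ :=
  6 * Real.exp 4 + 6 * Real.exp 2 + Real.exp 6 + 3 * Real.exp 4 + 3 * Real.exp 2 + 1

noncomputable def kwC : ℝ := 271 + 216 * kwM

lemma kwM_pos : 0 < kwM := by
  have := Real.exp_pos (4:ℝ); have := Real.exp_pos (2:ℝ); have := Real.exp_pos (6:ℝ)
  unfold kwM; linarith

set_option maxHeartbeats 2000000 in
lemma kw_G_bound {y : ℝ} (hy : 0 < y) (hy1 : y < 1) :
    |6 * y * Real.exp (4 * y) + 6 * y * Real.exp (2 * y) - Real.exp (6 * y)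
      - 3 * Real.exp (4 * y) + 3 * Real.exp (2 * y) + 1| ≤ kwC * y ^ 3 := by
  have hM := kwM_pos
  have hy3 : 0 < y ^ 3 := by positivity
  rcases le_or_gt y (1/6) with h6 | h6
  · -- Taylor expansion regime
    have h2 := kw_exp_taylor (t := 2*y) (by linarith) (by linarith)
    have h4 := kw_exp_taylor (t := 4*y) (by linarith) (by linarith)
    have hh6 := kw_exp_taylor (t := 6*y) (by linarith) (by linarith)
    rw [abs_le] at h2 h4 hh6
    set a := Real.exp (2*y) - (1 + 2*y + (2*y)^2/2 + (2*y)^3/6) with ha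
    set b := Real.exp (4*y) - (1 + 4*y + (4*y)^2/2 + (4*y)^3/6) with hb
    set c := Real.exp (6*y) - (1 + 6*y + (6*y)^2/2 + (6*y)^3/6) with hc
    have key : 6 * y * Real.exp (4 * y) + 6 * y * Real.exp (2 * y) - Real.exp (6 * y)
        - 3 * Real.exp (4 * y) + 3 * Real.exp (2 * y) + 1
        = -4*y^3 + 72*y^4 + 6*(y*b) + 6*(y*a) - c - 3*b + 3*a := by
      rw [ha, hb, hc]; ring
    clear_value a b c
    rw [key, abs_le]
    clear key ha hb hc
    have hya : y * a ≤ 5/6 * y^5 := by nlinarith [mul_le_mul_of_nonneg_left h2.2 hy.le]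
    have hya' : -(5/6 * y^5) ≤ y * a := by
      nlinarith [mul_le_mul_of_nonneg_left (neg_le_of_abs_le (abs_le.mpr h2) : -(5/96*(2*y)^4) ≤ a) hy.le]
    have hyb : y * b ≤ 40/3 * y^5 := by nlinarith [mul_le_mul_of_nonneg_left h4.2 hy.le]
    have hyb' : -(40/3 * y^5) ≤ y * b := by
      nlinarith [mul_le_mul_of_nonneg_left (neg_le_of_abs_le (abs_le.mpr h4) : -(5/96*(4*y)^4) ≤ b) hy.le]
    have hy4 : y ^ 4 ≤ (1/6) * y ^ 3 := by nlinarith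
    have hy5 : y ^ 5 ≤ (1/36) * y ^ 3 := by nlinarith
    have hMy : 0 < kwM * y ^ 3 := mul_pos hM hy3
    unfold kwC
    constructor <;> linarith [h2.1, h2.2, h4.1, h4.2, hh6.1, hh6.2, hya, hya', hyb, hyb']
  · -- crude regime
    have l2 : Real.exp (2*y) ≤ Real.exp 2 := Real.exp_le_exp.mpr (by linarith)
    have l4 : Real.exp (4*y) ≤ Real.exp 4 := Real.exp_le_exp.mpr (by linarith)
    have l6 : Real.exp (6*y) ≤ Real.exp 6 := Real.exp_le_exp.mpr (by linarith)
    have p2 := Real.exp_pos (2*y); have p4 := Real.exp_pos (4*y); have p6 := Real.exp_pos (6*y)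
    have s2 := Real.exp_pos (2:ℝ); have s4 := Real.exp_pos (4:ℝ); have s6 := Real.exp_pos (6:ℝ)
    have hL4 : y * Real.exp (4*y) ≤ Real.exp 4 := by nlinarith
    have hL2 : y * Real.exp (2*y) ≤ Real.exp 2 := by nlinarith
    have q4 : 0 < y * Real.exp (4*y) := mul_pos hy p4
    have q2 : 0 < y * Real.exp (2*y) := mul_pos hy p2
    have hG : |6 * y * Real.exp (4 * y) + 6 * y * Real.exp (2 * y) - Real.exp (6 * y)
        - 3 * Real.exp (4 * y) + 3 * Real.exp (2 * y) + 1| ≤ kwM := by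
      rw [abs_le]; unfold kwM
      constructor <;> linarith
    have hy3' : (1:ℝ)/216 < y ^ 3 := by
      have := pow_lt_pow_left₀ h6 (by norm_num : (0:ℝ) ≤ 1/6) (by norm_num : (3:ℕ) ≠ 0)
      norm_num at this ⊢; linarith
    have hkey : kwM ≤ 216 * kwM * y ^ 3 := by nlinarith [mul_lt_mul_of_pos_left hy3' hM]
    unfold kwC; nlinarith

lemma kwC_pos : 0 < kwC := by have := kwM_pos; unfold kwC; linarith

set_option maxHeartbeats 1000000 in
lemma kw_pointwise {y : ℝ} (hy : 0 < y) (hy1 : y < 1) :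
    |kwH y ^ 2 - 1 / y ^ 2| ≤ (kwC / 12) ^ 2 + kwC / 6 := by
  have hGb := kw_G_bound hy hy1
  have hkwC := kwC_pos
  set x := Real.exp (2 * y) with hxe
  have hx4 : Real.exp (4 * y) = x ^ 2 := by
    rw [hxe, sq, ← Real.exp_add]; ring_nf
  have hx6 : Real.exp (6 * y) = x ^ 3 := by
    rw [hxe, pow_succ, sq, ← Real.exp_add, ← Real.exp_add]; ring_nf
  rw [hx4, hx6] at hGb
  have hx1 : 1 < x := by
    rw [hxe, show (1:ℝ) = Real.exp 0 from (Real.exp_zero).symm]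
    exact Real.exp_lt_exp.mpr (by linarith)
  have hxy : 2 * y + 1 ≤ x := by rw [hxe]; exact Real.add_one_le_exp (2 * y)
  have h1 : 12 * y ≤ (x ^ 2 + 4 * x + 1) * (x - 1) := by
    nlinarith [sq_nonneg (x - 1), mul_nonneg (sq_nonneg (x - 1)) (sub_nonneg.mpr hx1.le)]
  have hden : 12 * y ^ 2 ≤ y * ((x ^ 2 + 4 * x + 1) * (x - 1)) := by
    nlinarith [mul_le_mul_of_nonneg_left h1 hy.le]
  have hdenpos : 0 < y * ((x ^ 2 + 4 * x + 1) * (x - 1)) := by nlinarith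
  have hid : kwH y - 1 / y
      = (6 * y * x ^ 2 + 6 * y * x - x ^ 3 - 3 * x ^ 2 + 3 * x + 1)
        / (y * ((x ^ 2 + 4 * x + 1) * (x - 1))) := by
    unfold kwH
    rw [hx4, ← hxe]
    rw [div_sub_div _ _ (by nlinarith) hy.ne', div_eq_div_iff (by nlinarith) hdenpos.ne']
    ring
  have hsub : |kwH y - 1 / y| ≤ kwC / 12 * y := by
    rw [hid, abs_div, abs_of_pos hdenpos, div_le_iff₀ hdenpos]
    have hc : 0 ≤ kwC / 12 * y := by positivity
    calc |6 * y * x ^ 2 + 6 * y * x - x ^ 3 - 3 * x ^ 2 + 3 * x + 1| ≤ kwC * y ^ 3 := hGb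
      _ ≤ kwC / 12 * y * (y * ((x ^ 2 + 4 * x + 1) * (x - 1))) := by
          nlinarith [mul_le_mul_of_nonneg_left hden hc]
  have hadd : |kwH y + 1 / y| ≤ kwC / 12 * y + 2 / y := by
    have he : kwH y + 1 / y = (kwH y - 1 / y) + 2 / y := by ring
    rw [he]
    refine (abs_add_le _ _).trans ?_
    rw [abs_of_pos (by positivity : 0 < 2 / y)]
    linarith
  have hsq : kwH y ^ 2 - 1 / y ^ 2 = (kwH y - 1 / y) * (kwH y + 1 / y) := by
    field_simp; ring
  rw [hsq, abs_mul]
  have step : |kwH y - 1 / y| * |kwH y + 1 / y| ≤ (kwC / 12 * y) * (kwC / 12 * y + 2 / y) :=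
    mul_le_mul hsub hadd (abs_nonneg _) (by positivity)
  have expand : (kwC / 12 * y) * (kwC / 12 * y + 2 / y) = (kwC / 12) ^ 2 * y ^ 2 + kwC / 6 := by
    field_simp; ring
  rw [expand] at step
  have hy2 : y ^ 2 ≤ 1 := by nlinarith
  nlinarith [mul_nonneg (sq_nonneg (kwC / 12)) (by nlinarith : (0:ℝ) ≤ 1 - y ^ 2)]

/-- The key cancellation behind equation (3.11): `h(y)² − 1/y²` is integrable
on `(0,1)`. -/
theorem kw_higgs_square_minus_pole_integrable :
    MeasureTheory.IntegrableOn (fun y : ℝ => |(kwH y) ^ 2 - 1 / y ^ 2|)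
      (Set.Ioo 0 1) := by
  have m2 : Measurable fun y : ℝ => Real.exp (2 * y) :=
    (Real.continuous_exp.comp (continuous_const.mul continuous_id)).measurable
  have m4 : Measurable fun y : ℝ => Real.exp (4 * y) :=
    (Real.continuous_exp.comp (continuous_const.mul continuous_id)).measurable
  have hk : Measurable kwH := by
    unfold kwH
    exact ((measurable_const.mul (m2.add measurable_const)).mul m2).div
      (((m4.add (measurable_const.mul m2)).add measurable_const).mul (m2.sub measurable_const))
  have hmeas : Measurable fun y : ℝ => |(kwH y) ^ 2 - 1 / y ^ 2| :=
    ((hk.pow_const 2).sub (measurable_const.div (measurable_id.pow_const 2))).abs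
  refine MeasureTheory.Measure.integrableOn_of_bounded (μ := MeasureTheory.volume)
    (s := Set.Ioo 0 1) (M := (kwC / 12) ^ 2 + kwC / 6) ?_ hmeas.aestronglyMeasurable ?_
  · exact (measure_Ioo_lt_top).ne
  · filter_upwards [MeasureTheory.ae_restrict_mem measurableSet_Ioo] with y hy
    rw [Real.norm_eq_abs, abs_abs]
    exact kw_pointwise hy.1 hy.2
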